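/- Let ε ∈ (0,1) and let S, T ⊆ {0,1}^n be nonempty. If X is uniform on {0,1}^n and Y is ε-correlated with X, then Pr[X ∈ S and Y ∈ T] ≤ (μ(S)·μ(T))^{1/(1+ε)}, where μ denotes uniform measure (density). -/

import Mathlib

/-!
The two-function hypercontractive inequality `𝔼[f(X) g(Y)] ≤ ‖f‖_{1+ε} ‖g‖_{1+ε}` tensorizes:
applying the inequality for one factor to the fibrewise norms of `f` and `g` reduces a product of
correlated pairs to its factors. For a single pair of bits, writing `f = a (1 ± s)` and
`g = b (1 ± t)` reduces it to `1 + ε s t ≤ ‖1 ± s‖_{1+ε} ‖1 ± t‖_{1+ε}`, which follows from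
Cauchy–Schwarz and `√(1 + ε s²) ≤ ‖1 ± s‖_{1+ε}`; the latter combines Bernoulli's inequality
with `(1 + s)^p + (1 - s)^p ≥ 2 + p (p - 1) s²` for `1 ≤ p ≤ 2`. Indicators of `S` and `T` then
give the bound.
-/

open Finset Real
open scoped BigOperators

lemma two_le_rpow_add_rpow_of_nonpos {q : ℝ} (hq : q ≤ 0) {x : ℝ} (hx : |x| < 1) :
    2 ≤ (1 + x) ^ q + (1 - x) ^ q := by
  obtain ⟨hx0, hx1⟩ := abs_lt.1 hx
  have hprod : 1 ≤ (1 + x) ^ q * (1 - x) ^ q := by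
    rw [← mul_rpow (by linarith) (by linarith)]
    exact one_le_rpow_of_pos_of_le_one_of_nonpos (by nlinarith) (by nlinarith [sq_nonneg x]) hq
  nlinarith [sq_nonneg ((1 + x) ^ q - (1 - x) ^ q), rpow_nonneg (by linarith : 0 ≤ 1 + x) q,
    rpow_nonneg (by linarith : 0 ≤ 1 - x) q]

lemma two_mul_mul_le_rpow_sub_rpow {q : ℝ} (hq0 : 0 ≤ q) (hq1 : q ≤ 1) {x : ℝ}
    (hx0 : 0 ≤ x) (hx1 : x ≤ 1) : 2 * q * x ≤ (1 + x) ^ q - (1 - x) ^ q := by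
  let k : ℝ → ℝ := fun y ↦ (1 + y) ^ q - (1 - y) ^ q - 2 * q * y
  have hk : MonotoneOn k (Set.Icc 0 1) := by
    refine monotoneOn_of_hasDerivWithinAt_nonneg (convex_Icc 0 1)
      (f' := fun y ↦ q * (1 + y) ^ (q - 1) + q * (1 - y) ^ (q - 1) - 2 * q) ?_ ?_ ?_
    · refine ContinuousOn.sub (ContinuousOn.sub ?_ ?_) (by fun_prop) <;>
        exact ContinuousOn.rpow_const (by fun_prop) fun _ _ ↦ Or.inr hq0
    · intro y hy
      rw [interior_Icc] at hy
      have h1 := ((hasDerivAt_id' y).const_add 1).rpow_const (p := q) (Or.inl (by linarith [hy.1]))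
      have h2 := ((hasDerivAt_id' y).const_sub 1).rpow_const (p := q) (Or.inl (by linarith [hy.2]))
      refine ((h1.sub h2).sub
        ((hasDerivAt_id' y).const_mul (2 * q))).hasDerivWithinAt.congr_deriv ?_
      ring
    · intro y hy
      rw [interior_Icc] at hy
      have := two_le_rpow_add_rpow_of_nonpos (by linarith : q - 1 ≤ 0)
        (abs_lt.2 ⟨by linarith [hy.1], hy.2⟩)
      nlinarith
  have := hk (Set.left_mem_Icc.2 zero_le_one) ⟨hx0, hx1⟩ hx0
  simp only [k] at this
  norm_num at this
  linarith

lemma two_add_mul_sq_le_rpow_add_rpow {p : ℝ} (hp1 : 1 ≤ p) (hp2 : p ≤ 2) {s : ℝ} (hs : |s| ≤ 1) :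
    2 + p * (p - 1) * s ^ 2 ≤ (1 + s) ^ p + (1 - s) ^ p := by
  wlog hs0 : 0 ≤ s generalizing s
  · have := this (s := -s) (by rwa [abs_neg]) (by linarith)
    rw [neg_sq, ← sub_eq_add_neg, sub_neg_eq_add] at this
    linarith
  let g : ℝ → ℝ := fun y ↦ (1 + y) ^ p + (1 - y) ^ p - p * (p - 1) * y ^ 2
  have hg : MonotoneOn g (Set.Icc 0 1) := by
    refine monotoneOn_of_hasDerivWithinAt_nonneg (convex_Icc 0 1)
      (f' := fun y ↦ p * (1 + y) ^ (p - 1) - p * (1 - y) ^ (p - 1) - p * (p - 1) * (2 * y))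
      ?_ ?_ ?_
    · refine ContinuousOn.sub (ContinuousOn.add ?_ ?_) (by fun_prop) <;>
        exact ContinuousOn.rpow_const (by fun_prop) fun _ _ ↦ Or.inr (by linarith)
    · intro y hy
      rw [interior_Icc] at hy
      have h1 := ((hasDerivAt_id' y).const_add 1).rpow_const (p := p) (Or.inl (by linarith [hy.1]))
      have h2 := ((hasDerivAt_id' y).const_sub 1).rpow_const (p := p) (Or.inl (by linarith [hy.2]))
      refine ((h1.add h2).sub
        ((hasDerivAt_pow 2 y).const_mul (p * (p - 1)))).hasDerivWithinAt.congr_deriv ?_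
      simp only [Nat.cast_ofNat]
      ring
    · intro y hy
      rw [interior_Icc] at hy
      have := two_mul_mul_le_rpow_sub_rpow (by linarith : 0 ≤ p - 1) (by linarith) hy.1.le hy.2.le
      nlinarith
  have := hg (Set.left_mem_Icc.2 zero_le_one) ⟨hs0, (abs_le.1 hs).2⟩ hs0
  simp only [g] at this
  norm_num at this
  linarith

lemma sqrt_one_add_mul_sq_le {ε : ℝ} (hε0 : 0 ≤ ε) (hε1 : ε ≤ 1) {s : ℝ} (hs : |s| ≤ 1) :
    √(1 + ε * s ^ 2) ≤ (((1 + s) ^ (1 + ε) + (1 - s) ^ (1 + ε)) / 2) ^ (1 + ε)⁻¹ := by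
  have hu : 0 ≤ 1 + ε * s ^ 2 := by positivity
  have hbernoulli : (1 + ε * s ^ 2) ^ ((1 + ε) / 2) ≤ 1 + (1 + ε) / 2 * (ε * s ^ 2) :=
    rpow_one_add_le_one_add_mul_self (by nlinarith [sq_nonneg s]) (by linarith) (by linarith)
  have htaylor := two_add_mul_sq_le_rpow_add_rpow (by linarith : 1 ≤ 1 + ε) (by linarith) hs
  rw [← rpow_rpow_inv (sqrt_nonneg _) (by linarith : 1 + ε ≠ 0), ← rpow_div_two_eq_sqrt _ hu]
  gcongr
  linarith

lemma one_add_mul_mul_le {ε : ℝ} (hε0 : 0 ≤ ε) (hε1 : ε ≤ 1) {s t : ℝ}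
    (hs : |s| ≤ 1) (ht : |t| ≤ 1) :
    1 + ε * s * t ≤ (((1 + s) ^ (1 + ε) + (1 - s) ^ (1 + ε)) / 2) ^ (1 + ε)⁻¹ *
      (((1 + t) ^ (1 + ε) + (1 - t) ^ (1 + ε)) / 2) ^ (1 + ε)⁻¹ := by
  have hcs : 1 + ε * s * t ≤ √(1 + ε * s ^ 2) * √(1 + ε * t ^ 2) := by
    rw [← sqrt_mul (by positivity)]
    exact le_sqrt_of_sq_le (by nlinarith [sq_nonneg (s - t)])
  refine hcs.trans (mul_le_mul (sqrt_one_add_mul_sq_le hε0 hε1 hs)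
    (sqrt_one_add_mul_sq_le hε0 hε1 ht) (sqrt_nonneg _) (rpow_nonneg ?_ _))
  obtain ⟨hs0, hs1⟩ := abs_le.1 hs
  exact div_nonneg (add_nonneg (rpow_nonneg (by linarith) _) (rpow_nonneg (by linarith) _))
    two_pos.le

section Hypercontractivity

variable {α β : Type*} [Fintype α] [Fintype β]

noncomputable def uniformLpNorm (p : ℝ) (f : α → ℝ) : ℝ := (𝔼 x, |f x| ^ p) ^ p⁻¹

lemma uniformLpNorm_nonneg (p : ℝ) (f : α → ℝ) : 0 ≤ uniformLpNorm p f :=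
  rpow_nonneg (expect_nonneg fun _ _ ↦ rpow_nonneg (abs_nonneg _) _) _

lemma uniformLpNorm_rpow {p : ℝ} (hp : p ≠ 0) (f : α → ℝ) :
    uniformLpNorm p f ^ p = 𝔼 x, |f x| ^ p :=
  rpow_inv_rpow (expect_nonneg fun _ _ ↦ rpow_nonneg (abs_nonneg _) _) hp

lemma uniformLpNorm_comp_equiv (p : ℝ) (e : α ≃ β) (f : β → ℝ) :
    uniformLpNorm p (fun x ↦ f (e x)) = uniformLpNorm p f := by
  rw [uniformLpNorm, uniformLpNorm, Fintype.expect_equiv e _ (fun y ↦ |f y| ^ p) fun _ ↦ rfl]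

lemma uniformLpNorm_uniformLpNorm {p : ℝ} (hp : p ≠ 0) (f : α × β → ℝ) :
    uniformLpNorm p (fun a ↦ uniformLpNorm p fun b ↦ f (a, b)) = uniformLpNorm p f := by
  rw [uniformLpNorm, uniformLpNorm, ← univ_product_univ, expect_product]
  simp_rw [abs_of_nonneg (uniformLpNorm_nonneg _ _), uniformLpNorm_rpow hp]

lemma uniformLpNorm_of_unique [Unique α] {p : ℝ} (hp : p ≠ 0) {f : α → ℝ} (hf : 0 ≤ f) :
    uniformLpNorm p f = f default := by
  rw [uniformLpNorm, Fintype.expect_eq_sum_div_card, Fintype.sum_unique, Fintype.card_unique,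
    Nat.cast_one, div_one, abs_of_nonneg (hf _), rpow_rpow_inv (hf _) hp]

/-- For `K` the joint law of a pair `(X, Y)` of `α`-valued random variables, this is the
two-function hypercontractive inequality `𝔼[f(X) g(Y)] ≤ ‖f‖_p ‖g‖_p` for nonnegative `f`, `g`,
with norms taken for the uniform measure. -/
def IsHypercontractive (p : ℝ) (K : α → α → ℝ) : Prop :=
  ∀ f g : α → ℝ, 0 ≤ f → 0 ≤ g →
    ∑ x, ∑ y, K x y * f x * g y ≤ uniformLpNorm p f * uniformLpNorm p g

lemma isHypercontractive_of_unique [Unique α] {p : ℝ} (hp : p ≠ 0) :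
    IsHypercontractive p fun _ _ : α ↦ (1 : ℝ) := by
  intro f g hf hg
  simp [uniformLpNorm_of_unique hp hf, uniformLpNorm_of_unique hp hg]

lemma IsHypercontractive.comp_equiv {p : ℝ} {K : α → α → ℝ} (hK : IsHypercontractive p K)
    (e : α ≃ β) : IsHypercontractive p fun x y ↦ K (e.symm x) (e.symm y) := by
  intro f g hf hg
  rw [← uniformLpNorm_comp_equiv p e f, ← uniformLpNorm_comp_equiv p e g]
  simp_rw [← e.sum_comp, e.symm_apply_apply]
  exact hK _ _ (fun _ ↦ hf _) (fun _ ↦ hg _)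

lemma IsHypercontractive.prod {p : ℝ} (hp : p ≠ 0) {K : α → α → ℝ} {L : β → β → ℝ}
    (hK : IsHypercontractive p K) (hK₀ : ∀ x y, 0 ≤ K x y) (hL : IsHypercontractive p L) :
    IsHypercontractive p fun u v : α × β ↦ K u.1 v.1 * L u.2 v.2 := by
  intro f g hf hg
  let F : α → ℝ := fun a ↦ uniformLpNorm p fun b ↦ f (a, b)
  let G : α → ℝ := fun a ↦ uniformLpNorm p fun b ↦ g (a, b)
  calc ∑ u, ∑ v, K u.1 v.1 * L u.2 v.2 * f u * g v
      = ∑ x, ∑ y, K x y * ∑ x', ∑ y', L x' y' * f (x, x') * g (y, y') := by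
        simp_rw [Fintype.sum_prod_type, mul_sum]
        refine sum_congr rfl fun x _ ↦ ?_
        rw [sum_comm]
        simp_rw [mul_assoc]
    _ ≤ ∑ x, ∑ y, K x y * F x * G y := by
        refine sum_le_sum fun x _ ↦ sum_le_sum fun y _ ↦ ?_
        rw [mul_assoc]
        exact mul_le_mul_of_nonneg_left (hL _ _ (fun _ ↦ hf _) (fun _ ↦ hg _)) (hK₀ x y)
    _ ≤ uniformLpNorm p F * uniformLpNorm p G :=
        hK F G (fun _ ↦ uniformLpNorm_nonneg _ _) (fun _ ↦ uniformLpNorm_nonneg _ _)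
    _ = uniformLpNorm p f * uniformLpNorm p g := by
        rw [uniformLpNorm_uniformLpNorm hp, uniformLpNorm_uniformLpNorm hp]

lemma IsHypercontractive.pi {p : ℝ} (hp : p ≠ 0) {K : α → α → ℝ}
    (hK : IsHypercontractive p K) (hK₀ : ∀ x y, 0 ≤ K x y) (n : ℕ) :
    IsHypercontractive p fun x y : Fin n → α ↦ ∏ i, K (x i) (y i) := by
  induction n with
  | zero => simpa using isHypercontractive_of_unique (α := Fin 0 → α) hp
  | succ n ih =>
    convert (hK.prod hp hK₀ ih).comp_equiv (Fin.consEquiv fun _ ↦ α) using 3 with x y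
    simp [Fin.prod_univ_succ, Fin.consEquiv, Fin.tail]

lemma uniformLpNorm_boole [DecidableEq α] {p : ℝ} (hp : p ≠ 0) (S : Finset α) :
    uniformLpNorm p (fun x ↦ if x ∈ S then (1 : ℝ) else 0) =
      ((S.card : ℝ) / Fintype.card α) ^ p⁻¹ := by
  simp [uniformLpNorm, apply_ite, zero_rpow hp, Fintype.expect_eq_sum_div_card]

lemma IsHypercontractive.sum_sum_le [DecidableEq α] {p : ℝ} {K : α → α → ℝ}
    (hK : IsHypercontractive p K) (hp : p ≠ 0) (S T : Finset α) :
    ∑ x ∈ S, ∑ y ∈ T, K x y ≤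
      ((S.card : ℝ) / Fintype.card α * ((T.card : ℝ) / Fintype.card α)) ^ p⁻¹ := by
  have := hK (fun x ↦ if x ∈ S then 1 else 0) (fun y ↦ if y ∈ T then 1 else 0)
    (fun _ ↦ by positivity) (fun _ ↦ by positivity)
  rw [uniformLpNorm_boole hp, uniformLpNorm_boole hp,
    ← mul_rpow (by positivity) (by positivity)] at this
  simpa only [mul_ite, mul_one, mul_zero, sum_ite_mem, univ_inter, sum_ite_irrel,
    sum_const_zero] using this

end Hypercontractivity

lemma exists_eq_mul_one_add_eq_mul_one_sub {a₀ a₁ : ℝ} (h₀ : 0 ≤ a₀) (h₁ : 0 ≤ a₁) :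
    ∃ a s : ℝ, 0 ≤ a ∧ |s| ≤ 1 ∧ a₀ = a * (1 + s) ∧ a₁ = a * (1 - s) := by
  rcases (add_nonneg h₀ h₁).eq_or_lt with h | h
  · exact ⟨0, 0, le_rfl, by simp, by linarith, by linarith⟩
  refine ⟨(a₀ + a₁) / 2, (a₀ - a₁) / (a₀ + a₁), by positivity, ?_, ?_, ?_⟩
  · rw [abs_div, abs_of_pos h, div_le_one h, abs_le]
    constructor <;> linarith
  all_goals field_simp; ring

lemma mean_mul_rpow_rpow_inv {p : ℝ} (hp : p ≠ 0) {a u v : ℝ} (ha : 0 ≤ a) (hu : 0 ≤ u)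
    (hv : 0 ≤ v) :
    (((a * u) ^ p + (a * v) ^ p) / 2) ^ p⁻¹ = a * ((u ^ p + v ^ p) / 2) ^ p⁻¹ := by
  rw [mul_rpow ha hu, mul_rpow ha hv, ← mul_add, mul_div_assoc,
    mul_rpow (rpow_nonneg ha _) (by positivity), rpow_rpow_inv ha hp]

/-- `noiseKernel ε b c = Pr[X = b ∧ Y = c]` for an `ε`-correlated pair of bits. -/
noncomputable def noiseKernel (ε : ℝ) (b c : Bool) : ℝ :=
  (if b = c then (1 + ε) / 2 else (1 - ε) / 2) / 2

lemma noiseKernel_nonneg {ε : ℝ} (hε0 : 0 ≤ ε) (hε1 : ε ≤ 1) (b c : Bool) :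
    0 ≤ noiseKernel ε b c := by
  unfold noiseKernel
  split_ifs <;> linarith

lemma uniformLpNorm_bool (p : ℝ) (f : Bool → ℝ) :
    uniformLpNorm p f = ((|f false| ^ p + |f true| ^ p) / 2) ^ p⁻¹ := by
  rw [uniformLpNorm, Fintype.expect_eq_sum_div_card, Fintype.sum_bool, Fintype.card_bool,
    Nat.cast_ofNat, add_comm]

lemma isHypercontractive_noiseKernel {ε : ℝ} (hε0 : 0 ≤ ε) (hε1 : ε ≤ 1) :
    IsHypercontractive (1 + ε) (noiseKernel ε) := by
  intro f g hf hg
  obtain ⟨a, s, ha, hs, hf₀, hf₁⟩ := exists_eq_mul_one_add_eq_mul_one_sub (hf false) (hf true)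
  obtain ⟨b, t, hb, ht, hg₀, hg₁⟩ := exists_eq_mul_one_add_eq_mul_one_sub (hg false) (hg true)
  obtain ⟨hs₀, hs₁⟩ := abs_le.1 hs
  obtain ⟨ht₀, ht₁⟩ := abs_le.1 ht
  have hp : 1 + ε ≠ 0 := by linarith
  rw [uniformLpNorm_bool, uniformLpNorm_bool, abs_of_nonneg (hf _), abs_of_nonneg (hf _),
    abs_of_nonneg (hg _), abs_of_nonneg (hg _), hf₀, hf₁, hg₀, hg₁,
    mean_mul_rpow_rpow_inv hp ha (by linarith) (by linarith),
    mean_mul_rpow_rpow_inv hp hb (by linarith) (by linarith)]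
  calc ∑ x, ∑ y, noiseKernel ε x y * f x * g y = a * b * (1 + ε * s * t) := by
        simp only [Fintype.sum_bool, noiseKernel, hf₀, hf₁, hg₀, hg₁]
        norm_num
        ring
    _ ≤ _ := by
        rw [mul_mul_mul_comm]
        exact mul_le_mul_of_nonneg_left (one_add_mul_mul_le hε0 hε1 hs ht) (mul_nonneg ha hb)

theorem boolean_hypercontractivity (n : ℕ) (ε : ℝ) (hε : ε ∈ Set.Ioo (0:ℝ) 1)
    (S T : Finset (Fin n → Bool)) :
    ∑ x ∈ S, ∑ y ∈ T,
        ((2:ℝ)^n)⁻¹ * ∏ i, (if x i = y i then (1+ε)/2 else (1-ε)/2)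
      ≤ (((S.card : ℝ) / 2^n) * ((T.card : ℝ) / 2^n)) ^ ((1+ε)⁻¹) := by
  obtain ⟨hε0, hε1⟩ := hε
  have hp : 1 + ε ≠ 0 := by linarith
  have hcube := (isHypercontractive_noiseKernel hε0.le hε1.le).pi hp
    (noiseKernel_nonneg hε0.le hε1.le) n
  convert hcube.sum_sum_le hp S T using 3 with x _ y _
  · simp only [noiseKernel]
    rw [prod_div_distrib, prod_const, card_univ, Fintype.card_fin, inv_mul_eq_div]
  all_goals simp
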